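/- Positivity of the type B persistence diagram: let F be an S-constructible persistence module valued in an (essentially small) abelian category C, with S = {s_1 < ... < s_n}, and let F_B : Dgm → B(C) be the Möbius inversion of the rank function dF_B(I) = π([image F(p < q')]) (values of the image of the structure map over I, pushed to the Grothendieck group B(C)). Then F_B(I) ⪰ 0 for every I ∈ Dgm; specifically, for I = [s_i, s_j), F_B(I) is the class in B(C) of the quotient (image F(s_i < s_j−δ) ∩ ker F(s_j−δ < s_{j+1}−δ)) / (image F(s_{i−1} < s_j−δ) ∩ ker F(s_j−δ < s_{j+1}−δ)) for sufficiently small δ > 0, hence lies in the positive cone. -/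

import Mathlib

open CategoryTheory CategoryTheory.Limits
open scoped Classical

/-- The poset `Dgm`: half-open intervals `[p,q)` with `p<q` together with `[p,∞)`. -/
def Dgm : Type := {x : ℝ × EReal // (x.1 : EReal) < x.2}

/-- The half-open interval `[p,q)`. -/
def Dgm.mkI (p q : ℝ) (h : p < q) : Dgm :=
  ⟨(p, (q : EReal)), by simpa using EReal.coe_lt_coe_iff.mpr h⟩

/-- The half-infinite interval `[p,∞)`. -/
noncomputable def Dgm.mkInf (p : ℝ) : Dgm := ⟨(p, ⊤), by simp⟩

variable (C : Type) [SmallCategory C] [Abelian C]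

/-- Isomorphism classes of objects of `C`. -/
abbrev Cls : Type := Quotient (isIsomorphicSetoid C)

/-- Relations coming from short exact sequences in `C`. -/
def BRel : Set (FreeAbelianGroup (Cls C)) :=
  {x | ∃ S : ShortComplex C, S.ShortExact ∧
    x = FreeAbelianGroup.of ⟦S.X₂⟧ - FreeAbelianGroup.of ⟦S.X₁⟧ - FreeAbelianGroup.of ⟦S.X₃⟧}

/-- The Grothendieck group `B(C)` of the abelian category `C`. -/
def BGroup : Type := FreeAbelianGroup (Cls C) ⧸ AddSubgroup.closure (BRel C)

instance : AddCommGroup (BGroup C) :=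
  inferInstanceAs (AddCommGroup (FreeAbelianGroup (Cls C) ⧸ AddSubgroup.closure (BRel C)))

/-- The class of an object of `C` in `B(C)`. -/
def clsB (a : C) : BGroup C := QuotientAddGroup.mk (FreeAbelianGroup.of ⟦a⟧)

/-- The translation-invariant partial order on `B(C)`: the positive cone is generated by
classes of objects. -/
def leB (x y : BGroup C) : Prop :=
  y - x ∈ AddSubmonoid.closure (Set.range (clsB C))

/-- The "rank function" `d F_B : Dgm → B(C)`: the class of the image of the structure map
of `F` across an interval, using the constructibility conventions (`δ` below a right
endpoint lying in `S = {s 1 < ⋯ < s n}`, and `s (n+1)` as terminal value for `[p,∞)`). -/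
noncomputable def dFB (n : ℕ) (s : ℕ → ℝ) (δ : ℝ) (F : ℝ ⥤ C) (I : Dgm) : BGroup C :=
  if I.1.2 = ⊤ then
    clsB C (image (F.map (homOfLE (le_max_left I.1.1 (s (n + 1))))))
  else if ∃ i : ℕ, 1 ≤ i ∧ i ≤ n ∧ (s i : EReal) = I.1.2 then
    clsB C (image (F.map (homOfLE (le_max_left I.1.1 (I.1.2.toReal - δ)))))
  else
    clsB C (image (F.map (homOfLE (le_max_left I.1.1 I.1.2.toReal))))

/-!
Everything reduces to one fact about an abelian category: for composable maps
`X →f Y →g Z →h W`, the alternating sum `[im g] - [im gh] + [im fgh] - [im fg]` is the class of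
an object. Indeed `[im g] = [ker (im g → W)] + [im gh]` and likewise for `fg`, while the
factorisation `im fg ↪ im g` restricts to a monomorphism `ker (im fg → W) ↪ ker (im g → W)`;
the alternating sum is the class of its cokernel, which is the paper's quotient
`(im F(s_i < s_j - δ) ∩ ker) / (im F(s_{i-1} < s_j - δ) ∩ ker)`.
-/

section GrothendieckGroup

variable {C}

lemma clsB_congr {a b : C} (e : a ≅ b) : clsB C a = clsB C b :=
  congrArg (fun x => (QuotientAddGroup.mk x : BGroup C))
    (congrArg FreeAbelianGroup.of (Quotient.sound ⟨e⟩))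

lemma clsB_X₂_of_shortExact {S : ShortComplex C} (hS : S.ShortExact) :
    clsB C S.X₂ = clsB C S.X₁ + clsB C S.X₃ := by
  have hrel : clsB C S.X₂ - clsB C S.X₁ - clsB C S.X₃ = 0 :=
    (QuotientAddGroup.eq_zero_iff _).mpr (AddSubgroup.subset_closure ⟨S, hS, rfl⟩)
  rwa [sub_sub, sub_eq_zero] at hrel

lemma leB_zero_clsB (a : C) : leB C 0 (clsB C a) := by
  rw [leB, sub_zero]
  exact AddSubmonoid.subset_closure ⟨a, rfl⟩

lemma clsB_eq_kernel_add_image {A B : C} (u : A ⟶ B) :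
    clsB C A = clsB C (kernel u) + clsB C (image u) := by
  have w : kernel.ι u ≫ factorThruImage u = 0 := by
    rw [← cancel_mono (image.ι u)]
    simp
  exact clsB_X₂_of_shortExact (ShortComplex.ShortExact.mk'
    (ShortComplex.exact_of_f_is_kernel _
      (isKernelOfComp (image.ι u) u (kernelIsKernel u) w (image.fac u)))
    inferInstance inferInstance : (ShortComplex.mk _ _ w).ShortExact)

lemma clsB_eq_add_cokernel {A B : C} (m : A ⟶ B) [Mono m] :
    clsB C B = clsB C A + clsB C (cokernel m) :=
  clsB_X₂_of_shortExact (ShortComplex.ShortExact.mk'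
    (ShortComplex.exact_of_g_is_cokernel _ (cokernelIsCokernel m)) inferInstance inferInstance :
      (ShortComplex.mk m (cokernel.π m) (cokernel.condition m)).ShortExact)

lemma clsB_image_eq_kernel_add_image_comp {Y Z W : C} (g : Y ⟶ Z) (h : Z ⟶ W) :
    clsB C (image g) = clsB C (kernel (image.ι g ≫ h)) + clsB C (image (g ≫ h)) := by
  have himage : clsB C (image (image.ι g ≫ h)) = clsB C (image (g ≫ h)) := by
    have := isIso_of_mono_of_epi (image.preComp (factorThruImage g) (image.ι g ≫ h))
    rw [← clsB_congr (asIso (image.preComp (factorThruImage g) (image.ι g ≫ h)))]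
    simp
  rw [← himage]
  exact clsB_eq_kernel_add_image _

lemma exists_clsB_eq_image_sub_image_comp {X Y Z : C} (f : X ⟶ Y) (g : Y ⟶ Z) :
    ∃ G : C, clsB C (image g) - clsB C (image (f ≫ g)) = clsB C G :=
  ⟨cokernel (image.preComp f g), by rw [clsB_eq_add_cokernel (image.preComp f g)]; abel⟩

lemma exists_clsB_eq_image_alternating_sum {X Y Z W : C} (f : X ⟶ Y) (g : Y ⟶ Z) (h : Z ⟶ W) :
    ∃ G : C, clsB C (image g) - clsB C (image (g ≫ h))
      + clsB C (image ((f ≫ g) ≫ h)) - clsB C (image (f ≫ g)) = clsB C G := by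
  have hcond : (kernel.ι (image.ι (f ≫ g) ≫ h) ≫ image.preComp f g) ≫ image.ι g ≫ h = 0 := by
    simp only [Category.assoc, image.preComp_ι_assoc]
    simp
  let φ := kernel.lift (image.ι g ≫ h) _ hcond
  have : Mono φ := by
    have : Mono (φ ≫ kernel.ι _) := by
      rw [kernel.lift_ι]
      infer_instance
    exact mono_of_mono φ (kernel.ι _)
  refine ⟨cokernel φ, ?_⟩
  rw [clsB_image_eq_kernel_add_image_comp g h, clsB_image_eq_kernel_add_image_comp (f ≫ g) h,
    clsB_eq_add_cokernel φ]
  abel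

end GrothendieckGroup

lemma CategoryTheory.Functor.map_homOfLE_trans {D : Type*} [Category D] (F : ℝ ⥤ D)
    {a b c : ℝ} (hab : a ≤ b) (hbc : b ≤ c) :
    F.map (homOfLE (hab.trans hbc)) = F.map (homOfLE hab) ≫ F.map (homOfLE hbc) :=
  F.map_comp _ _

section RankFunction

variable {C} (F : ℝ ⥤ C)

/-- `F(p < max p q)` is the shape in which `dFB` reads `F`. -/
noncomputable def rankB (p q : ℝ) : BGroup C :=
  clsB C (image (F.map (homOfLE (le_max_left p q))))

lemma rankB_of_le {p q : ℝ} (h : p ≤ q) :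
    rankB F p q = clsB C (image (F.map (homOfLE h))) := by
  have hcongr : ∀ r (hr : p ≤ r), r = q →
      clsB C (image (F.map (homOfLE hr))) = clsB C (image (F.map (homOfLE h))) := by
    rintro r hr rfl
    rfl
  exact hcongr _ _ (max_eq_right h)

lemma exists_rankB_sub_eq_clsB {a b c : ℝ} (hab : a ≤ b) (hbc : b ≤ c) :
    ∃ G : C, rankB F b c - rankB F a c = clsB C G := by
  rw [rankB_of_le F hbc, rankB_of_le F (hab.trans hbc), F.map_homOfLE_trans hab hbc]
  exact exists_clsB_eq_image_sub_image_comp _ _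

lemma exists_rankB_alternating_sum_eq_clsB {a b c d : ℝ} (hab : a ≤ b) (hbc : b ≤ c)
    (hcd : c ≤ d) :
    ∃ G : C, rankB F b c - rankB F b d + rankB F a d - rankB F a c = clsB C G := by
  rw [rankB_of_le F hbc, rankB_of_le F (hbc.trans hcd), rankB_of_le F (hab.trans hbc),
    rankB_of_le F ((hab.trans hbc).trans hcd), F.map_homOfLE_trans hbc hcd,
    F.map_homOfLE_trans (hab.trans hbc) hcd, F.map_homOfLE_trans hab hbc]
  exact exists_clsB_eq_image_alternating_sum _ _ _

end RankFunction

section Diagram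

variable {C} (n : ℕ) (s : ℕ → ℝ) (δ : ℝ) (F : ℝ ⥤ C)

lemma dFB_mkI_of_mem {p q : ℝ} (hpq : p < q) (hq : ∃ i : ℕ, 1 ≤ i ∧ i ≤ n ∧ s i = q) :
    dFB C n s δ F (Dgm.mkI p q hpq) = rankB F p (q - δ) := by
  have hq' : ∃ i : ℕ, 1 ≤ i ∧ i ≤ n ∧ (s i : EReal) = (q : EReal) := by
    obtain ⟨i, hi, hin, rfl⟩ := hq
    exact ⟨i, hi, hin, rfl⟩
  simp only [dFB, Dgm.mkI, EReal.coe_ne_top, if_false, EReal.toReal_coe]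
  exact if_pos hq'

lemma dFB_mkI_of_not_mem {p q : ℝ} (hpq : p < q) (hq : ¬ ∃ i : ℕ, 1 ≤ i ∧ i ≤ n ∧ s i = q) :
    dFB C n s δ F (Dgm.mkI p q hpq) = rankB F p q := by
  have hq' : ¬ ∃ i : ℕ, 1 ≤ i ∧ i ≤ n ∧ (s i : EReal) = (q : EReal) := by
    simpa only [EReal.coe_eq_coe_iff] using hq
  simp only [dFB, Dgm.mkI, EReal.coe_ne_top, if_false, EReal.toReal_coe]
  exact if_neg hq'

lemma dFB_mkInf (p : ℝ) : dFB C n s δ F (Dgm.mkInf p) = rankB F p (s (n + 1)) := by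
  simp only [dFB, Dgm.mkInf, if_true]
  rfl

variable {n s δ}

/-- Intervals ending at `s (j + 1)` are read at level `s (j + 1) - δ` when `j < n` and at
`s (n + 1)` when `j = n`. -/
lemma exists_dFB_mkI_succ_eq_rankB (hs : StrictMono s) (hδ : 0 < δ) {j : ℕ} (hjn : j ≤ n) :
    ∃ d, s j - δ ≤ d ∧
      ∀ p (hp : p < s (j + 1)), dFB C n s δ F (Dgm.mkI p (s (j + 1)) hp) = rankB F p d := by
  have hsucc : s j < s (j + 1) := hs (Nat.lt_succ_self j)
  rcases hjn.lt_or_eq with hjn | rfl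
  · exact ⟨s (j + 1) - δ, by linarith, fun p hp =>
      dFB_mkI_of_mem n s δ F hp ⟨j + 1, by omega, hjn, rfl⟩⟩
  · refine ⟨s (j + 1), by linarith, fun p hp => dFB_mkI_of_not_mem j s δ F hp ?_⟩
    rintro ⟨k, -, hk, hsk⟩
    exact (hs (Nat.lt_succ_of_le hk)).ne hsk

end Diagram

/-- Positivity of the type `B` persistence diagram of an `S`-constructible persistence
module `F` valued in an abelian category: every value of the Möbius inversion `F_B`
of `d F_B` lies in the positive cone of `B(C)`. -/
theorem typeB_diagram_positive
    (n : ℕ) (s : ℕ → ℝ) (hs : StrictMono s)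
    (δ : ℝ) (hδ : 0 < δ) (hδ' : ∀ i : ℕ, i ≤ n → δ < s (i + 1) - s i)
    (F : ℝ ⥤ C)
    -- `FB` is the Möbius inversion of `d F_B`:
    (FB : Dgm → BGroup C)
    (hFB1 : ∀ i j : ℕ, 1 ≤ i → ∀ hij : i < j, j ≤ n →
      FB (Dgm.mkI (s i) (s j) (hs hij)) =
        dFB C n s δ F (Dgm.mkI (s i) (s j) (hs hij))
        - dFB C n s δ F (Dgm.mkI (s i) (s (j + 1)) (hs (by omega)))
        + dFB C n s δ F (Dgm.mkI (s (i - 1)) (s (j + 1)) (hs (by omega)))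
        - dFB C n s δ F (Dgm.mkI (s (i - 1)) (s j) (hs (by omega))))
    (hFB2 : ∀ i : ℕ, 1 ≤ i → i ≤ n →
      FB (Dgm.mkInf (s i)) = dFB C n s δ F (Dgm.mkInf (s i)) - dFB C n s δ F (Dgm.mkInf (s (i - 1))))
    (hFB0 : ∀ I : Dgm,
      (¬ ∃ i j : ℕ, 1 ≤ i ∧ i ≤ n ∧ 1 ≤ j ∧ j ≤ n ∧
          ∃ hij : s i < s j, I = Dgm.mkI (s i) (s j) hij) →
      (¬ ∃ i : ℕ, 1 ≤ i ∧ i ≤ n ∧ I = Dgm.mkInf (s i)) → FB I = 0) :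
    ∀ I : Dgm, leB C 0 (FB I) := by
  intro I
  by_cases hfin : ∃ i j : ℕ, 1 ≤ i ∧ i ≤ n ∧ 1 ≤ j ∧ j ≤ n ∧
      ∃ hij : s i < s j, I = Dgm.mkI (s i) (s j) hij
  · obtain ⟨i, j, hi, -, hj, hjn, hij, rfl⟩ := hfin
    have hij : i < j := hs.lt_iff_lt.mp hij
    have hprev : s i ≤ s j - δ := by
      have := hδ' (j - 1) (by omega)
      rw [Nat.sub_add_cancel hj] at this
      linarith [hs.monotone (Nat.le_sub_one_of_lt hij)]
    obtain ⟨d, hd, hdFB⟩ := exists_dFB_mkI_succ_eq_rankB F hs hδ hjn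
    obtain ⟨G, hG⟩ := exists_rankB_alternating_sum_eq_clsB F (hs.monotone (Nat.sub_le i 1))
      hprev hd
    rw [hFB1 i j hi hij hjn, hdFB, hdFB, dFB_mkI_of_mem n s δ F _ ⟨j, hj, hjn, rfl⟩,
      dFB_mkI_of_mem n s δ F _ ⟨j, hj, hjn, rfl⟩, hG]
    exact leB_zero_clsB G
  by_cases hinf : ∃ i : ℕ, 1 ≤ i ∧ i ≤ n ∧ I = Dgm.mkInf (s i)
  · obtain ⟨i, hi, hin, rfl⟩ := hinf
    obtain ⟨G, hG⟩ := exists_rankB_sub_eq_clsB F (hs.monotone (Nat.sub_le i 1))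
      (hs.monotone (Nat.le_succ_of_le hin))
    rw [hFB2 i hi hin, dFB_mkInf, dFB_mkInf, hG]
    exact leB_zero_clsB G
  rw [hFB0 I hfin hinf, leB, sub_zero]
  exact zero_mem _
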